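/- For every integer k ≥ 2 and every θ > 0, the integral defining 𝒢_k(θ) converges and 𝒢_k(θ) = 2 · k! · Σ_{p=1}^∞ (1 − e^{−pθ}) / p^{k+1}. -/

import Mathlib

open MeasureTheory Real Set

/-- The function `𝒢_k(θ)` of the Landau damping analysis. -/
noncomputable def calG (k : ℕ) (θ : ℝ) : ℝ :=
  ∫ t in Set.Ioi (0:ℝ),
    Real.sinh (θ / 2) * t ^ k / (Real.sinh (t / 2) * Real.sinh ((t + θ) / 2))

lemma aux_integrable (k : ℕ) {c : ℝ} (hc : 0 < c) :
    IntegrableOn (fun t : ℝ => t ^ k * Real.exp (-(c * t))) (Set.Ioi 0) := by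
  have h := integrableOn_rpow_mul_exp_neg_mul_rpow (p := 1) (s := (k : ℝ))
    (lt_of_lt_of_le neg_one_lt_zero (Nat.cast_nonneg k)) one_pos hc
  refine h.congr_fun (fun x hx => ?_) measurableSet_Ioi
  dsimp only
  rw [Real.rpow_one, Real.rpow_natCast, neg_mul]

lemma aux_integral (k : ℕ) {c : ℝ} (hc : 0 < c) :
    ∫ t in Set.Ioi (0:ℝ), t ^ k * Real.exp (-(c * t))
      = (k.factorial : ℝ) / c ^ (k + 1) := by
  have h := Real.integral_rpow_mul_exp_neg_mul_Ioi (a := (k:ℝ)+1) (r := c)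
    (by positivity) hc
  rw [show ((k:ℝ)+1) - 1 = (k:ℝ) by ring] at h
  have h2 : ∫ t in Set.Ioi (0:ℝ), t ^ (k:ℝ) * Real.exp (-(c * t))
      = ∫ t in Set.Ioi (0:ℝ), t ^ k * Real.exp (-(c * t)) := by
    refine setIntegral_congr_fun measurableSet_Ioi (fun x hx => ?_)
    rw [Real.rpow_natCast]
  rw [h2] at h
  rw [h, show Real.Gamma ((k:ℝ)+1) = k.factorial from Real.Gamma_nat_eq_factorial k,
    show (k:ℝ)+1 = ((k+1 : ℕ) : ℝ) by push_cast; ring, Real.rpow_natCast]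
  rw [div_pow, one_pow, div_mul_eq_mul_div, one_mul]

lemma key_alg {A B : ℝ} (hA : 1 < A) (hB : 1 < B) :
    (B - B⁻¹)/2 / (((A - A⁻¹)/2) * ((A*B - (A*B)⁻¹)/2))
      = 2 * (1/(A^2 - 1) - 1/(A^2*B^2 - 1)) := by
  have hA0 : (0:ℝ) < A := one_pos.trans hA
  have hB0 : (0:ℝ) < B := one_pos.trans hB
  have h1 : A - A⁻¹ ≠ 0 := by
    have : A⁻¹ < 1 := inv_lt_one_of_one_lt₀ hA
    nlinarith
  have h2 : A*B - (A*B)⁻¹ ≠ 0 := by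
    have hAB : 1 < A*B := one_lt_mul_of_lt_of_le hA hB.le
    have : (A*B)⁻¹ < 1 := inv_lt_one_of_one_lt₀ hAB
    nlinarith
  have h3 : A^2 - 1 ≠ 0 := by nlinarith
  have h4 : A^2*B^2 - 1 ≠ 0 := by
    have hA2 : 1 < A^2 := by nlinarith
    have hB2 : 1 < B^2 := by nlinarith
    have : 1 < A^2*B^2 := one_lt_mul_of_lt_of_le hA2 hB2.le
    nlinarith
  have hD : ((A - A⁻¹)/2) * ((A*B - (A*B)⁻¹)/2) ≠ 0 := by
    exact mul_ne_zero (by simpa using h1) (by simpa using h2)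
  rw [div_eq_iff hD]
  have h5 : B^2*A^2 - 1 ≠ 0 := by intro h; apply h4; linear_combination h
  field_simp
  ring

lemma key_pointwise {θ t : ℝ} (hθ : 0 < θ) (ht : 0 < t) :
    Real.sinh (θ/2) / (Real.sinh (t/2) * Real.sinh ((t+θ)/2))
      = 2 * (1/(Real.exp t - 1) - 1/(Real.exp (t+θ) - 1)) := by
  have hA : 1 < Real.exp (t/2) := Real.one_lt_exp_iff.mpr (by linarith)
  have hB : 1 < Real.exp (θ/2) := Real.one_lt_exp_iff.mpr (by linarith)
  have e1 : Real.exp ((t+θ)/2) = Real.exp (t/2) * Real.exp (θ/2) := by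
    rw [← Real.exp_add]; ring_nf
  have e2 : Real.exp t = Real.exp (t/2) ^ 2 := by
    rw [sq, ← Real.exp_add]; ring_nf
  have e3 : Real.exp (t+θ) = Real.exp (t/2) ^ 2 * Real.exp (θ/2) ^ 2 := by
    rw [Real.exp_add, e2, sq (Real.exp (θ/2)), ← Real.exp_add]; ring_nf
  rw [Real.sinh_eq, Real.sinh_eq, Real.sinh_eq, Real.exp_neg, Real.exp_neg, Real.exp_neg,
    e1, e2, e3]
  exact key_alg hA hB

lemma geom_summable {x : ℝ} (hx : 0 < x) :
    Summable (fun p : ℕ => Real.exp (-(((p:ℝ)+1) * x))) := by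
  have h0 : (0:ℝ) ≤ Real.exp (-x) := (Real.exp_pos _).le
  have h1 : Real.exp (-x) < 1 := Real.exp_lt_one_iff.mpr (by linarith)
  have := (summable_geometric_of_lt_one h0 h1).mul_left (Real.exp (-x))
  refine this.congr fun p => ?_
  rw [← Real.exp_nat_mul, ← Real.exp_add]
  ring_nf

lemma geom_sum {x : ℝ} (hx : 0 < x) :
    ∑' p : ℕ, Real.exp (-(((p:ℝ)+1) * x)) = 1 / (Real.exp x - 1) := by
  have h0 : (0:ℝ) ≤ Real.exp (-x) := (Real.exp_pos _).le
  have h1 : Real.exp (-x) < 1 := Real.exp_lt_one_iff.mpr (by linarith)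
  have hcongr : ∀ p : ℕ, Real.exp (-(((p:ℝ)+1) * x)) = Real.exp (-x) * Real.exp (-x) ^ p := by
    intro p
    rw [← Real.exp_nat_mul, ← Real.exp_add]
    ring_nf
  rw [tsum_congr hcongr, tsum_mul_left, tsum_geometric_of_lt_one h0 h1]
  have hex : (0:ℝ) < Real.exp x - 1 := by
    have := Real.one_lt_exp_iff.mpr hx
    linarith
  rw [Real.exp_neg]
  have he : Real.exp x ≠ 0 := (Real.exp_pos x).ne'
  field_simp

lemma series_pointwise (k : ℕ) {θ t : ℝ} (hθ : 0 < θ) (ht : 0 < t) :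
    Real.sinh (θ/2) * t^k / (Real.sinh (t/2) * Real.sinh ((t+θ)/2))
      = ∑' p : ℕ, 2*(1 - Real.exp (-(((p:ℝ)+1)*θ))) * (t^k * Real.exp (-(((p:ℝ)+1)*t))) := by
  have hterm : ∀ p : ℕ, 2*(1 - Real.exp (-(((p:ℝ)+1)*θ))) * (t^k * Real.exp (-(((p:ℝ)+1)*t)))
      = (2*t^k) * (Real.exp (-(((p:ℝ)+1)*t)) - Real.exp (-(((p:ℝ)+1)*(t+θ)))) := by
    intro p
    have h : Real.exp (-(((p:ℝ)+1)*(t+θ)))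
        = Real.exp (-(((p:ℝ)+1)*t)) * Real.exp (-(((p:ℝ)+1)*θ)) := by
      rw [← Real.exp_add]; ring_nf
    rw [h]; ring
  rw [tsum_congr hterm, tsum_mul_left,
    Summable.tsum_sub (geom_summable ht) (geom_summable (show (0:ℝ) < t + θ by linarith)),
    geom_sum ht, geom_sum (show (0:ℝ) < t + θ by linarith)]
  rw [show Real.sinh (θ/2) * t^k / (Real.sinh (t/2) * Real.sinh ((t+θ)/2))
      = t^k * (Real.sinh (θ/2) / (Real.sinh (t/2) * Real.sinh ((t+θ)/2))) by ring,
    key_pointwise hθ ht]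
  ring

/-- convergence and series representation of `𝒢_k(θ)`. -/
theorem stmt_12 (k : ℕ) (hk : 2 ≤ k) (θ : ℝ) (hθ : 0 < θ) :
    MeasureTheory.IntegrableOn
      (fun t => Real.sinh (θ / 2) * t ^ k / (Real.sinh (t / 2) * Real.sinh ((t + θ) / 2)))
      (Set.Ioi 0) MeasureTheory.volume ∧
    calG k θ = 2 * (Nat.factorial k) *
      ∑' p : ℕ, (1 - Real.exp (-(((p : ℝ) + 1) * θ))) / ((p : ℝ) + 1) ^ (k + 1) := by
  set f : ℝ → ℝ := fun t =>
    Real.sinh (θ / 2) * t ^ k / (Real.sinh (t / 2) * Real.sinh ((t + θ) / 2)) with hf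
  set g : ℕ → ℝ → ℝ := fun p t =>
    2*(1 - Real.exp (-(((p:ℝ)+1)*θ))) * (t^k * Real.exp (-(((p:ℝ)+1)*t))) with hg
  have hp1 : ∀ p : ℕ, (0:ℝ) < (p:ℝ) + 1 := fun p => by positivity
  have hEθ : ∀ p : ℕ, Real.exp (-(((p:ℝ)+1)*θ)) ≤ 1 := by
    intro p
    rw [Real.exp_le_one_iff]
    have := hp1 p
    nlinarith
  -- integrability of each g p
  have hgint : ∀ p : ℕ, IntegrableOn (g p) (Set.Ioi 0) volume := fun p =>
    (aux_integrable k (hp1 p)).const_mul _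
  -- value of each integral
  have hgval : ∀ p : ℕ, ∫ t in Set.Ioi (0:ℝ), g p t
      = 2*(1 - Real.exp (-(((p:ℝ)+1)*θ))) * ((k.factorial : ℝ) / ((p:ℝ)+1)^(k+1)) := by
    intro p
    simp only [hg]
    rw [MeasureTheory.integral_const_mul, aux_integral k (hp1 p)]
  -- integrals of norms
  have hgnorm : ∀ p : ℕ, ∫ t in Set.Ioi (0:ℝ), ‖g p t‖ = ∫ t in Set.Ioi (0:ℝ), g p t := by
    intro p
    refine setIntegral_congr_fun measurableSet_Ioi (fun t ht => ?_)
    rw [Real.norm_of_nonneg]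
    have h1 : (0:ℝ) ≤ 1 - Real.exp (-(((p:ℝ)+1)*θ)) := by linarith [hEθ p]
    have h2 : (0:ℝ) ≤ t := (mem_Ioi.mp ht).le
    positivity
  -- summability of the integral norms
  have hsum : Summable (fun p : ℕ => ∫ t in Set.Ioi (0:ℝ), ‖g p t‖) := by
    have hbase : Summable (fun n : ℕ => 1 / ((n:ℝ)) ^ (k+1)) :=
      summable_one_div_nat_pow.mpr (by omega)
    have hshift : Summable (fun n : ℕ => 1 / (((n:ℝ)+1)) ^ (k+1)) := by
      have := (summable_nat_add_iff 1).mpr hbase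
      refine this.congr fun n => ?_
      push_cast
      ring_nf
    have hmaj := hshift.mul_left (2 * (k.factorial : ℝ))
    refine Summable.of_nonneg_of_le (fun p => ?_) (fun p => ?_) hmaj
    · rw [hgnorm p, hgval p]
      have h1 : (0:ℝ) ≤ 1 - Real.exp (-(((p:ℝ)+1)*θ)) := by linarith [hEθ p]
      have := hp1 p
      positivity
    · rw [hgnorm p, hgval p]
      have h1 : (0:ℝ) ≤ 1 - Real.exp (-(((p:ℝ)+1)*θ)) := by linarith [hEθ p]
      have h2 : 1 - Real.exp (-(((p:ℝ)+1)*θ)) ≤ 1 := by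
        have := Real.exp_pos (-(((p:ℝ)+1)*θ)); linarith
      have h3 : (0:ℝ) < ((p:ℝ)+1)^(k+1) := by positivity
      have h4 : (0:ℝ) ≤ (k.factorial : ℝ) / ((p:ℝ)+1)^(k+1) := by positivity
      calc 2*(1 - Real.exp (-(((p:ℝ)+1)*θ))) * ((k.factorial : ℝ) / ((p:ℝ)+1)^(k+1))
          ≤ 2*1*((k.factorial : ℝ) / ((p:ℝ)+1)^(k+1)) := by nlinarith
        _ = 2 * (k.factorial : ℝ) * (1 / ((p:ℝ)+1)^(k+1)) := by ring
  -- pointwise equality on Ioi 0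
  have heq : ∀ t ∈ Set.Ioi (0:ℝ), f t = ∑' p : ℕ, g p t := by
    intro t ht
    exact series_pointwise k hθ (mem_Ioi.mp ht)
  -- integrability of f
  have hfint : IntegrableOn f (Set.Ioi 0) volume := by
    have hbound : IntegrableOn (fun t : ℝ => 2 * (t ^ (k-1) * Real.exp (-(2⁻¹ * t))))
        (Set.Ioi 0) volume := (aux_integrable (k-1) (by norm_num)).const_mul 2
    refine hbound.mono' ?_ ?_
    · refine Measurable.aestronglyMeasurable ?_
      fun_prop
    · filter_upwards [ae_restrict_mem measurableSet_Ioi] with t ht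
      have ht0 : (0:ℝ) < t := mem_Ioi.mp ht
      have hfnonneg : 0 ≤ f t := by
        simp only [hf]
        have s1 : 0 < Real.sinh (θ/2) := Real.sinh_pos_iff.mpr (by linarith)
        have s2 : 0 < Real.sinh (t/2) := Real.sinh_pos_iff.mpr (by linarith)
        have s3 : 0 < Real.sinh ((t+θ)/2) := Real.sinh_pos_iff.mpr (by linarith)
        have h2 : (0:ℝ) ≤ t := ht0.le
        positivity
      rw [Real.norm_of_nonneg hfnonneg]
      have hE1 : (0:ℝ) < Real.exp t - 1 := by
        have := Real.one_lt_exp_iff.mpr ht0; linarith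
      have hE2 : (0:ℝ) < Real.exp (t+θ) - 1 := by
        have := Real.one_lt_exp_iff.mpr (show (0:ℝ) < t + θ by linarith); linarith
      have hfe : f t = 2*t^k*(1/(Real.exp t - 1) - 1/(Real.exp (t+θ) - 1)) := by
        simp only [hf]
        rw [show Real.sinh (θ/2) * t^k / (Real.sinh (t/2) * Real.sinh ((t+θ)/2))
            = t^k * (Real.sinh (θ/2) / (Real.sinh (t/2) * Real.sinh ((t+θ)/2))) by ring,
          key_pointwise hθ ht0]
        ring
      -- key inequality: t * exp(t/2) ≤ exp t - 1
      have hs : t/2 < Real.sinh (t/2) := Real.self_lt_sinh_iff.mpr (by linarith)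
      have hexp2 : Real.exp t = Real.exp (t/2) ^ 2 := by
        rw [sq, ← Real.exp_add]; ring_nf
      have het : Real.exp t - 1 = 2 * Real.exp (t/2) * Real.sinh (t/2) := by
        rw [Real.sinh_eq, Real.exp_neg, hexp2]
        have hne : Real.exp (t/2) ≠ 0 := (Real.exp_pos _).ne'
        field_simp
      have h1 : t * Real.exp (t/2) ≤ Real.exp t - 1 := by
        rw [het]
        nlinarith [Real.exp_pos (t/2)]
      have hrec : Real.exp (-(2⁻¹*t)) * Real.exp (t/2) = 1 := by
        rw [← Real.exp_add, show -(2⁻¹*t) + t/2 = 0 by ring, Real.exp_zero]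
      have hk1 : k - 1 + 1 = k := by omega
      have htk : t^k = t^(k-1) * t := by rw [← pow_succ, hk1]
      have step : t^(k-1) * Real.exp (-(2⁻¹*t)) * (t * Real.exp (t/2))
          ≤ t^(k-1) * Real.exp (-(2⁻¹*t)) * (Real.exp t - 1) := by
        refine mul_le_mul_of_nonneg_left h1 ?_
        positivity
      have eq1 : t^(k-1) * Real.exp (-(2⁻¹*t)) * (t * Real.exp (t/2)) = t^k := by
        rw [htk]
        linear_combination (t^(k-1) * t) * hrec
      -- final chain
      rw [hfe]
      have hpos2 : (0:ℝ) < 1/(Real.exp (t+θ) - 1) := by positivity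
      have hstep1 : 2*t^k*(1/(Real.exp t - 1) - 1/(Real.exp (t+θ) - 1))
          ≤ 2*t^k*(1/(Real.exp t - 1)) := by
        have hk0 : (0:ℝ) ≤ t^k := by positivity
        nlinarith
      refine hstep1.trans ?_
      rw [mul_one_div, div_le_iff₀ hE1]
      calc 2*t^k = 2*(t^(k-1) * Real.exp (-(2⁻¹*t)) * (t * Real.exp (t/2))) := by rw [eq1]
        _ ≤ 2*(t^(k-1) * Real.exp (-(2⁻¹*t)) * (Real.exp t - 1)) := by linarith [step]
        _ = 2 * (t^(k-1) * Real.exp (-(2⁻¹*t))) * (Real.exp t - 1) := by ring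
  refine ⟨hfint, ?_⟩
  have hswap := integral_tsum_of_summable_integral_norm hgint hsum
  have hcongr : ∫ t in Set.Ioi (0:ℝ), f t = ∫ t in Set.Ioi (0:ℝ), ∑' p : ℕ, g p t :=
    setIntegral_congr_fun measurableSet_Ioi heq
  have : calG k θ = ∑' p : ℕ, ∫ t in Set.Ioi (0:ℝ), g p t := by
    rw [calG, ← hf]
    rw [hcongr, ← hswap]
  rw [this, tsum_congr hgval, ← tsum_mul_left]
  exact tsum_congr fun p => by ring
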